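/- Let L be a DGLA with H²(L) = 0. Then every solution of the Maurer–Cartan equation modulo t^{k+1} in L ⊗ (t)/(t^{k+1}) extends to a solution modulo t^{k+2}: given φ₁,…,φ_k ∈ L¹ with d(Σtⁱφᵢ) + ½[Σtⁱφᵢ, Σtⁱφᵢ] ≡ 0 mod t^{k+1}, there exists φ_{k+1} ∈ L¹ with dφ_{k+1} = -½ Σ_{i+j=k+1, i,j≥1} [φᵢ, φⱼ]. The key fact is that ω := ½ Σ_{i+j=k+1} [φᵢ,φⱼ] is d-closed whenever the lower-order MC equations hold. -/
import Mathlib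


/-- Let `L` be a DGLA (over a field of characteristic zero) with
`H²(L) = 0`.  Then every solution of the Maurer–Cartan equation modulo `t^{k+1}`
extends to a solution modulo `t^{k+2}`: given `φ₁, …, φ_k ∈ L¹` satisfying the
order-`n` MC equations `dφ_n + ½ ∑_{i+j=n, i,j ≥ 1} [φ_i, φ_j] = 0` for `n ≤ k`,
there exists `φ_{k+1} ∈ L¹` with
`dφ_{k+1} = -½ ∑_{i+j=k+1, i,j ≥ 1} [φ_i, φ_j]`. -/
theorem stmt_16 {K V : Type*} [Field K] [CharZero K] [AddCommGroup V] [Module K V]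
    (𝒜 : ℤ → Submodule K V) (hinternal : DirectSum.IsInternal 𝒜)
    (br : V →ₗ[K] V →ₗ[K] V) (d : V →ₗ[K] V)
    (hd2 : d ∘ₗ d = 0)
    (hddeg : ∀ (i : ℤ), ∀ x ∈ 𝒜 i, d x ∈ 𝒜 (i + 1))
    (hbrdeg : ∀ (i j : ℤ), ∀ x ∈ 𝒜 i, ∀ y ∈ 𝒜 j, br x y ∈ 𝒜 (i + j))
    (antisymm : ∀ (i j : ℤ), ∀ x ∈ 𝒜 i, ∀ y ∈ 𝒜 j,
      br x y = -((-1 : K) ^ (i * j)) • br y x)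
    (jacobi : ∀ (i j : ℤ), ∀ x ∈ 𝒜 i, ∀ y ∈ 𝒜 j, ∀ z : V,
      br x (br y z) = br (br x y) z + ((-1 : K) ^ (i * j)) • br y (br x z))
    (leibniz : ∀ (i : ℤ), ∀ x ∈ 𝒜 i, ∀ y : V,
      d (br x y) = br (d x) y + ((-1 : K) ^ i) • br x (d y))
    -- `H²(L) = 0` : every `d`-closed element of degree 2 is exact
    (hH2 : ∀ x ∈ 𝒜 2, d x = 0 → ∃ y ∈ 𝒜 1, d y = x)
    (k : ℕ) (φ : ℕ → V) (hφdeg : ∀ i, φ i ∈ 𝒜 1)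
    (hMC : ∀ n : ℕ, 1 ≤ n → n ≤ k →
      d (φ n) + (2 : K)⁻¹ • ∑ i ∈ Finset.Ioo 0 n, br (φ i) (φ (n - i)) = 0) :
    ∃ ψ ∈ 𝒜 1,
      d ψ = -((2 : K)⁻¹ • ∑ i ∈ Finset.Ioo 0 (k + 1), br (φ i) (φ (k + 1 - i))) := by
  classical
  set s : Finset ℕ := Finset.Ioo 0 (k + 1) with hs
  -- degree facts
  have hφ2 : ∀ a b : ℕ, br (φ a) (φ b) ∈ 𝒜 2 := fun a b => by
    simpa using hbrdeg 1 1 (φ a) (hφdeg a) (φ b) (hφdeg b)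
  have hdφ2 : ∀ a : ℕ, d (φ a) ∈ 𝒜 2 := fun a => by
    simpa using hddeg 1 (φ a) (hφdeg a)
  -- specialized sign identities
  have br12 : ∀ x ∈ 𝒜 1, ∀ y ∈ 𝒜 2, br x y = -br y x := by
    intro x hx y hy
    have h := antisymm 1 2 x hx y hy
    norm_num at h
    exact h
  have leib1 : ∀ x ∈ 𝒜 1, ∀ y : V, d (br x y) = br (d x) y - br x (d y) := by
    intro x hx y
    have h := leibniz 1 x hx y
    norm_num at h
    rw [h]; abel
  have jac : ∀ x ∈ 𝒜 1, ∀ y ∈ 𝒜 1, ∀ z : V,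
      br (br x y) z = br x (br y z) + br y (br x z) := by
    intro x hx y hy z
    have h := jacobi 1 1 x hx y hy z
    norm_num at h
    rw [h]; abel
  -- MC, rearranged
  have hdφ : ∀ i ∈ s, d (φ i) =
      -((2 : K)⁻¹ • ∑ a ∈ Finset.Ioo 0 i, br (φ a) (φ (i - a))) := by
    intro i hi
    rw [hs, Finset.mem_Ioo] at hi
    exact eq_neg_of_add_eq_zero_left (hMC i hi.1 (by omega))
  -- reindexing by the involution i ↦ k+1-i
  have hinv : ∀ g : ℕ → V, ∑ i ∈ s, g i = ∑ i ∈ s, g (k + 1 - i) := by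
    intro g
    refine Finset.sum_nbij' (fun i => k + 1 - i) (fun i => k + 1 - i) ?_ ?_ ?_ ?_ ?_ <;>
      intro a ha <;> rw [hs, Finset.mem_Ioo] at ha
    · simp only [hs, Finset.mem_Ioo]; omega
    · simp only [hs, Finset.mem_Ioo]; omega
    · show k + 1 - (k + 1 - a) = a; omega
    · show k + 1 - (k + 1 - a) = a; omega
    · show g a = g (k + 1 - (k + 1 - a)); congr 1; omega
  -- the triple-sum domain
  set D3 : Finset (ℕ × ℕ × ℕ) :=
    (Finset.range (k + 2) ×ˢ Finset.range (k + 2) ×ˢ Finset.range (k + 2)).filter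
      (fun t => 1 ≤ t.1 ∧ 1 ≤ t.2.1 ∧ 1 ≤ t.2.2 ∧ t.1 + t.2.1 + t.2.2 = k + 1) with hD3
  have hmemD3 : ∀ t : ℕ × ℕ × ℕ, t ∈ D3 ↔
      (1 ≤ t.1 ∧ 1 ≤ t.2.1 ∧ 1 ≤ t.2.2 ∧ t.1 + t.2.1 + t.2.2 = k + 1) := by
    intro t
    rw [hD3, Finset.mem_filter, Finset.mem_product, Finset.mem_product,
      Finset.mem_range, Finset.mem_range, Finset.mem_range]
    constructor
    · rintro ⟨_, h⟩; exact h
    · rintro h; exact ⟨by omega, h⟩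
  set F : ℕ → ℕ → ℕ → V := fun a b c => br (br (φ a) (φ b)) (φ c) with hF
  -- cyclic reindexing on D3
  have hcyc : ∀ G : ℕ → ℕ → ℕ → V,
      ∑ t ∈ D3, G t.1 t.2.1 t.2.2 = ∑ t ∈ D3, G t.2.1 t.2.2 t.1 := by
    intro G
    refine Finset.sum_nbij' (fun t => (t.2.2, t.1, t.2.1)) (fun t => (t.2.1, t.2.2, t.1))
      ?_ ?_ ?_ ?_ ?_ <;> rintro ⟨a, b, c⟩ ha
    · rw [hmemD3] at ha ⊢; simp only at ha ⊢; omega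
    · rw [hmemD3] at ha ⊢; simp only at ha ⊢; omega
    · rfl
    · rfl
    · rfl
  -- swap of last two on D3
  have hswap : ∀ G : ℕ → ℕ → ℕ → V,
      ∑ t ∈ D3, G t.1 t.2.1 t.2.2 = ∑ t ∈ D3, G t.1 t.2.2 t.2.1 := by
    intro G
    refine Finset.sum_nbij' (fun t => (t.1, t.2.2, t.2.1)) (fun t => (t.1, t.2.2, t.2.1))
      ?_ ?_ ?_ ?_ ?_ <;> rintro ⟨a, b, c⟩ ha
    · rw [hmemD3] at ha ⊢; simp only at ha ⊢; omega
    · rw [hmemD3] at ha ⊢; simp only at ha ⊢; omega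
    · rfl
    · rfl
    · rfl
  -- the triple sum vanishes
  set T3 : V := ∑ t ∈ D3, F t.1 t.2.1 t.2.2 with hT3
  have hTzero : T3 = 0 := by
    have hpt : ∀ t ∈ D3, F t.1 t.2.1 t.2.2 =
        -F t.2.1 t.2.2 t.1 + -F t.1 t.2.2 t.2.1 := by
      intro t ht
      rw [hmemD3] at ht
      obtain ⟨a, b, c⟩ := t
      simp only at ht ⊢
      have h1 : F a b c = br (φ a) (br (φ b) (φ c)) + br (φ b) (br (φ a) (φ c)) :=
        jac (φ a) (hφdeg a) (φ b) (hφdeg b) (φ c)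
      have h2 : br (φ a) (br (φ b) (φ c)) = -F b c a :=
        br12 (φ a) (hφdeg a) _ (hφ2 b c)
      have h3 : br (φ b) (br (φ a) (φ c)) = -F a c b :=
        br12 (φ b) (hφdeg b) _ (hφ2 a c)
      rw [h1, h2, h3]
    have heq : T3 = -T3 + -T3 := by
      calc T3 = ∑ t ∈ D3, (-F t.2.1 t.2.2 t.1 + -F t.1 t.2.2 t.2.1) :=
            Finset.sum_congr rfl hpt
        _ = -(∑ t ∈ D3, F t.2.1 t.2.2 t.1) + -(∑ t ∈ D3, F t.1 t.2.2 t.2.1) := by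
            rw [Finset.sum_add_distrib, Finset.sum_neg_distrib, Finset.sum_neg_distrib]
        _ = -T3 + -T3 := by
            rw [(hcyc F).symm.trans hT3.symm, (hswap F).symm.trans hT3.symm]
    have h3T : (3 : K) • T3 = 0 := by
      have : T3 + T3 + T3 = 0 := by nth_rewrite 1 [heq]; abel
      rw [show (3 : K) = 1 + 1 + 1 by norm_num, add_smul, add_smul, one_smul]
      exact this
    have h30 : (3 : K) ≠ 0 := by norm_num
    rcases smul_eq_zero.mp h3T with h | h
    · exact absurd h h30
    · exact h
  -- relate the nested double sum to the triple sum
  have hnest : ∑ i ∈ s, ∑ a ∈ Finset.Ioo 0 i, F a (i - a) (k + 1 - i) = T3 := by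
    rw [Finset.sum_sigma' s (fun i => Finset.Ioo 0 i)
      (fun i a => F a (i - a) (k + 1 - i)), hT3]
    refine Finset.sum_nbij' (fun x => (x.2, x.1 - x.2, k + 1 - x.1))
      (fun t => ⟨t.1 + t.2.1, t.1⟩) ?_ ?_ ?_ ?_ ?_
    · rintro ⟨i, a⟩ hx
      rw [Finset.mem_sigma, hs, Finset.mem_Ioo, Finset.mem_Ioo] at hx
      rw [hmemD3]; simp only at hx ⊢; omega
    · rintro ⟨a, b, c⟩ ht
      rw [hmemD3] at ht
      simp only at ht
      rw [Finset.mem_sigma, hs, Finset.mem_Ioo, Finset.mem_Ioo]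
      simp only; omega
    · intro x hx
      rw [Finset.mem_sigma, hs, Finset.mem_Ioo, Finset.mem_Ioo] at hx
      obtain ⟨i, a⟩ := x
      simp only at hx ⊢
      congr 1 <;> omega
    · intro t ht
      rw [hmemD3] at ht
      obtain ⟨a, b, c⟩ := t
      simp only at ht ⊢
      ext <;> simp <;> omega
    · intro x hx; rfl
  -- compute d of the main sum
  set S : V := ∑ i ∈ s, br (φ i) (φ (k + 1 - i)) with hS
  have hdS : d S = 0 := by
    have step1 : d S = ∑ i ∈ s,
        (br (d (φ i)) (φ (k + 1 - i)) + br (d (φ (k + 1 - i))) (φ i)) := by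
      rw [hS, map_sum]
      refine Finset.sum_congr rfl fun i hi => ?_
      rw [leib1 (φ i) (hφdeg i), br12 (φ i) (hφdeg i) _ (hdφ2 (k + 1 - i))]
      abel
    have step2 : ∑ i ∈ s, br (d (φ (k + 1 - i))) (φ i)
        = ∑ i ∈ s, br (d (φ i)) (φ (k + 1 - i)) := by
      rw [hinv (fun i => br (d (φ (k + 1 - i))) (φ i))]
      refine Finset.sum_congr rfl fun i hi => ?_
      rw [hs, Finset.mem_Ioo] at hi
      show br (d (φ (k + 1 - (k + 1 - i)))) (φ (k + 1 - i)) = br (d (φ i)) (φ (k + 1 - i))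
      rw [show k + 1 - (k + 1 - i) = i from by omega]
    have hU : ∑ i ∈ s, br (d (φ i)) (φ (k + 1 - i)) = 0 := by
      have : ∑ i ∈ s, br (d (φ i)) (φ (k + 1 - i))
          = ∑ i ∈ s, -((2 : K)⁻¹ • ∑ a ∈ Finset.Ioo 0 i, F a (i - a) (k + 1 - i)) := by
        refine Finset.sum_congr rfl fun i hi => ?_
        rw [hdφ i hi]
        simp only [map_neg, map_smul, map_sum, LinearMap.neg_apply, LinearMap.smul_apply,
          LinearMap.sum_apply, hF]
      rw [this, Finset.sum_neg_distrib, ← Finset.smul_sum, hnest, hTzero, smul_zero, neg_zero]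
    rw [step1, Finset.sum_add_distrib, step2, hU, add_zero]
  -- conclude via H² = 0
  have hmem : -((2 : K)⁻¹ • S) ∈ 𝒜 2 := by
    refine neg_mem (Submodule.smul_mem _ _ (Submodule.sum_mem _ fun i _ => hφ2 _ _))
  have hclosed : d (-((2 : K)⁻¹ • S)) = 0 := by
    rw [map_neg, map_smul, hdS, smul_zero, neg_zero]
  obtain ⟨ψ, hψ1, hψ2⟩ := hH2 _ hmem hclosed
  exact ⟨ψ, hψ1, hψ2⟩
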